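/- Let P be a regular H-palindromic matrix polynomial of degree m with n×n coefficients, let λ ∈ ℂ with |λ| = 1, and let x ∈ ℂⁿ with ‖x‖₂ = 1; set r := −P(λ)x. Then the spectral-norm structured backward error over the class S_p of H-palindromic polynomials of degree m satisfies η₂^{S_p}(λ, x, P) = ‖r‖₂/√(m+1); in particular it equals the unstructured backward error η₂(λ, x, P) = ‖r‖₂/‖Λ_m‖₂ (note ‖Λ_m‖₂² = m+1 when |λ| = 1). -/

import Mathlib

/-!
For `|λ| = 1` palindromy gives `P(λ)ᴴ = conj(λ)^m P(λ)`, so with `μ² = λ^m`, `|μ| = 1`, the matrix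
`conj(μ) P(λ)` is Hermitian. Hence `x` and `conj(μ) r` have a real inner product, and a scaled
Householder reflection is a Hermitian `H` with `H x = conj(μ) r` and `‖H‖₂ = ‖r‖₂`. The
perturbation `ΔA_j = conj(λ)^j μ H / (m + 1)` is then H-palindromic, satisfies `ΔP(λ) x = r`, and
has `|||ΔP|||₂ = ‖r‖₂ / √(m + 1)`. Conversely, for any perturbation at all, the triangle and
Cauchy–Schwarz inequalities give `‖r‖₂ ≤ ‖Λ_m‖₂ |||ΔP|||₂`.
-/

noncomputable section

/-- Euclidean (ℓ²) norm of a complex vector. -/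
def vnorm {α : Type*} [Fintype α] (x : α → ℂ) : ℝ :=
  Real.sqrt (∑ i, ‖x i‖ ^ 2)

/-- Frobenius norm of a complex matrix. -/
def frobNorm {α : Type*} [Fintype α] (A : Matrix α α ℂ) : ℝ :=
  Real.sqrt (∑ i, ∑ j, ‖A i j‖ ^ 2)

/-- Spectral (operator 2-)norm of a complex matrix. -/
def specNorm {α : Type*} [Fintype α] [DecidableEq α] (A : Matrix α α ℂ) : ℝ :=
  ‖Matrix.toEuclideanCLM (𝕜 := ℂ) A‖

/-- Evaluation of the matrix polynomial `P(z) = ∑_{j=0}^m z^j A_j`. -/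
def evalP {n : ℕ} (m : ℕ) (A : ℕ → Matrix (Fin n) (Fin n) ℂ) (z : ℂ) :
    Matrix (Fin n) (Fin n) ℂ :=
  ∑ j ∈ Finset.range (m + 1), z ^ j • A j

/-- `‖Λ_m‖₂² = ∑_{j=0}^m |λ|^{2j}` where `Λ_m = (1, λ, …, λ^m)ᵀ`. -/
def LamNormSq (m : ℕ) (lam : ℂ) : ℝ :=
  ∑ j ∈ Finset.range (m + 1), ‖lam‖ ^ (2 * j)

/-- `‖Π₊(Λ_m)‖₂²`. -/
def PiPlusSq (m : ℕ) (lam : ℂ) : ℝ :=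
  if m % 2 = 1 then
    ∑ j ∈ Finset.range ((m + 1) / 2), ‖lam ^ j + lam ^ (m - j)‖ ^ 2 / 2
  else
    (∑ j ∈ Finset.range (m / 2), ‖lam ^ j + lam ^ (m - j)‖ ^ 2 / 2) + ‖lam ^ (m / 2)‖ ^ 2

/-- `‖Π₋(Λ_m)‖₂²`. -/
def PiMinusSq (m : ℕ) (lam : ℂ) : ℝ :=
  if m % 2 = 1 then
    ∑ j ∈ Finset.range ((m + 1) / 2), ‖lam ^ j - lam ^ (m - j)‖ ^ 2 / 2
  else
    ∑ j ∈ Finset.range (m / 2), ‖lam ^ j - lam ^ (m - j)‖ ^ 2 / 2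

/-- Spectral-norm structured backward error over H-palindromic polynomials of degree `m`. -/
def eta2_Hpal {n : ℕ} (m : ℕ) (A : ℕ → Matrix (Fin n) (Fin n) ℂ) (lam : ℂ)
    (x : Fin n → ℂ) : ℝ :=
  sInf { e : ℝ | ∃ Δ : ℕ → Matrix (Fin n) (Fin n) ℂ,
    (∀ j ≤ m, Δ (m - j) = (Δ j).conjTranspose) ∧
    (evalP m A lam).mulVec x + (evalP m Δ lam).mulVec x = 0 ∧
    e = Real.sqrt (∑ j ∈ Finset.range (m + 1), specNorm (Δ j) ^ 2) }

open Submodule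

section Reflection

variable {𝕜 E : Type*} [RCLike 𝕜] [NormedAddCommGroup E] [InnerProductSpace 𝕜 E]

local notation "⟪" x ", " y "⟫" => inner 𝕜 x y

theorem Submodule.reflection_sub_of_inner_comm {v w : E} (h : ‖v‖ = ‖w‖)
    (hvw : ⟪v, w⟫ = ⟪w, v⟫) :
    reflection (𝕜 ∙ (v - w))ᗮ v = w := by
  set R := reflection (𝕜 ∙ (v - w))ᗮ
  suffices R v + R v = w + w by
    apply smul_right_injective E (by simp : (2 : 𝕜) ≠ 0)
    simpa [two_smul] using this
  have h₁ : R (v - w) = -(v - w) := reflection_orthogonalComplement_singleton_eq_neg (v - w)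
  have h₂ : R (v + w) = v + w := by
    apply reflection_mem_subspace_eq_self
    rw [mem_orthogonal_singleton_iff_inner_left, inner_add_left, inner_sub_right,
      inner_sub_right, hvw, inner_self_eq_norm_sq_to_K, inner_self_eq_norm_sq_to_K, h]
    ring
  convert congr_arg₂ (· + ·) h₂ h₁ using 1
  · simp
  · abel

theorem Submodule.inner_reflection_left (K : Submodule 𝕜 E) [K.HasOrthogonalProjection]
    (v w : E) :
    ⟪K.reflection v, w⟫ = ⟪v, K.reflection w⟫ := by
  conv_lhs => rw [← K.reflection_reflection w]
  rw [LinearIsometryEquiv.inner_map_map]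

variable [CompleteSpace E]

theorem exists_isSelfAdjoint_apply_eq {x s : E} (hx : ‖x‖ = 1) (hxs : ⟪x, s⟫ = ⟪s, x⟫) :
    ∃ T : E →L[𝕜] E, IsSelfAdjoint T ∧ T x = s ∧ ‖T‖ = ‖s‖ := by
  rcases eq_or_ne s 0 with rfl | hs
  · exact ⟨0, IsSelfAdjoint.zero _, by simp, by simp⟩
  set y := (‖s‖⁻¹ : 𝕜) • s
  have hsy : s = (‖s‖ : 𝕜) • y := by
    rw [smul_smul, mul_inv_cancel₀ (by simpa using hs), one_smul]
  have hy : ‖y‖ = 1 := by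
    rw [norm_smul, norm_inv, RCLike.norm_ofReal, abs_norm, inv_mul_cancel₀ (norm_ne_zero_iff.2 hs)]
  have hxy : ⟪x, y⟫ = ⟪y, x⟫ := by
    simp only [y, inner_smul_left, inner_smul_right, hxs, RCLike.conj_inv, RCLike.conj_ofReal]
  -- `⟪x, s⟫` real makes the Householder reflection exchanging `x` and `y = s / ‖s‖` exist.
  set R := reflection (𝕜 ∙ (x - y))ᗮ
  set T := (‖s‖ : 𝕜) • (R.toContinuousLinearEquiv : E →L[𝕜] E)
  have hTx : T x = s := by simp [T, R, reflection_sub_of_inner_comm (hx.trans hy.symm) hxy, ← hsy]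
  refine ⟨T, ?_, hTx, le_antisymm ?_ ?_⟩
  · rw [ContinuousLinearMap.isSelfAdjoint_iff_isSymmetric]
    intro v w
    simp [T, R, inner_smul_left, inner_smul_right, inner_reflection_left]
  · exact ContinuousLinearMap.opNorm_le_bound _ (norm_nonneg _) fun v => by simp [T, norm_smul]
  · simpa [hTx, hx] using T.le_opNorm x

end Reflection

open Matrix

section VectorNorms

variable {α : Type*} [Fintype α]

theorem vnorm_eq_norm_toLp (x : α → ℂ) : vnorm x = ‖WithLp.toLp 2 x‖ := by
  rw [EuclideanSpace.norm_eq]; rfl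

theorem vnorm_smul (c : ℂ) (x : α → ℂ) : vnorm (c • x) = ‖c‖ * vnorm x := by
  rw [vnorm_eq_norm_toLp, vnorm_eq_norm_toLp, WithLp.toLp_smul, norm_smul]

theorem vnorm_neg (x : α → ℂ) : vnorm (-x) = vnorm x := by
  rw [vnorm_eq_norm_toLp, vnorm_eq_norm_toLp, WithLp.toLp_neg, norm_neg]

theorem vnorm_sum_le {ι : Type*} (s : Finset ι) (f : ι → α → ℂ) :
    vnorm (∑ i ∈ s, f i) ≤ ∑ i ∈ s, vnorm (f i) := by
  simpa only [vnorm_eq_norm_toLp, WithLp.toLp_sum] using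
    norm_sum_le s fun i => WithLp.toLp 2 (f i)

variable [DecidableEq α]

theorem specNorm_nonneg (A : Matrix α α ℂ) : 0 ≤ specNorm A := norm_nonneg _

theorem specNorm_smul (c : ℂ) (A : Matrix α α ℂ) : specNorm (c • A) = ‖c‖ * specNorm A := by
  rw [specNorm, map_smul, norm_smul, specNorm]

theorem vnorm_mulVec_le (A : Matrix α α ℂ) (x : α → ℂ) :
    vnorm (A *ᵥ x) ≤ specNorm A * vnorm x := by
  simpa only [vnorm_eq_norm_toLp, specNorm, toEuclideanCLM_toLp] using
    (toEuclideanCLM (𝕜 := ℂ) A).le_opNorm (WithLp.toLp 2 x)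

theorem Matrix.IsHermitian.exists_isHermitian_mulVec_eq {M : Matrix α α ℂ} (hM : M.IsHermitian)
    {x : α → ℂ} (hx : vnorm x = 1) :
    ∃ H : Matrix α α ℂ, H.IsHermitian ∧ H *ᵥ x = M *ᵥ x ∧ specNorm H = vnorm (M *ᵥ x) := by
  have hM' : IsSelfAdjoint (toEuclideanCLM (𝕜 := ℂ) M) := hM.isSelfAdjoint.map _
  obtain ⟨T, hT, hTx, hTnorm⟩ := exists_isSelfAdjoint_apply_eq (E := EuclideanSpace ℂ α)
    (x := WithLp.toLp 2 x) (s := toEuclideanCLM (𝕜 := ℂ) M (WithLp.toLp 2 x))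
    (by rwa [← vnorm_eq_norm_toLp]) (hM'.isSymmetric _ _).symm
  set H := (toEuclideanCLM (𝕜 := ℂ) (n := α)).symm T
  have hH : toEuclideanCLM (𝕜 := ℂ) H = T := StarAlgEquiv.apply_symm_apply _ T
  refine ⟨H, (hT.map (toEuclideanCLM (𝕜 := ℂ) (n := α)).symm).isHermitian, ?_, ?_⟩
  · apply WithLp.toLp_injective 2
    rw [← toEuclideanCLM_toLp, ← toEuclideanCLM_toLp, hH, hTx]
  · rw [specNorm, hH, hTnorm, toEuclideanCLM_toLp, vnorm_eq_norm_toLp]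

end VectorNorms

section MatrixPolynomial

open Finset

variable {n : ℕ}

theorem evalP_mulVec (m : ℕ) (A : ℕ → Matrix (Fin n) (Fin n) ℂ) (z : ℂ) (x : Fin n → ℂ) :
    evalP m A z *ᵥ x = ∑ j ∈ range (m + 1), z ^ j • (A j *ᵥ x) := by
  simp only [evalP, sum_mulVec, smul_mulVec]

theorem LamNormSq_eq_of_norm_eq_one {lam : ℂ} (hlam : ‖lam‖ = 1) (m : ℕ) :
    LamNormSq m lam = m + 1 := by
  simp [LamNormSq, hlam]

theorem vnorm_evalP_mulVec_le (m : ℕ) (Δ : ℕ → Matrix (Fin n) (Fin n) ℂ) (lam : ℂ)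
    (x : Fin n → ℂ) :
    vnorm (evalP m Δ lam *ᵥ x) ≤
      √(LamNormSq m lam) * √(∑ j ∈ range (m + 1), specNorm (Δ j) ^ 2) * vnorm x := by
  calc vnorm (evalP m Δ lam *ᵥ x)
      ≤ ∑ j ∈ range (m + 1), ‖lam‖ ^ j * (specNorm (Δ j) * vnorm x) := by
        rw [evalP_mulVec]
        refine (vnorm_sum_le _ _).trans (sum_le_sum fun j _ => ?_)
        rw [vnorm_smul, norm_pow]
        exact mul_le_mul_of_nonneg_left (vnorm_mulVec_le _ _) (by positivity)
    _ = (∑ j ∈ range (m + 1), ‖lam‖ ^ j * specNorm (Δ j)) * vnorm x := by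
        rw [sum_mul]; simp only [mul_assoc]
    _ ≤ √(LamNormSq m lam) * √(∑ j ∈ range (m + 1), specNorm (Δ j) ^ 2) * vnorm x := by
        gcongr
        · exact Real.sqrt_nonneg _
        simpa only [LamNormSq, pow_mul'] using
          Real.sum_mul_le_sqrt_mul_sqrt (range (m + 1)) (‖lam‖ ^ ·) (specNorm <| Δ ·)

theorem mul_star_of_norm_eq_one {z : ℂ} (hz : ‖z‖ = 1) : z * star z = 1 := by
  rw [Complex.star_def, Complex.mul_conj', hz]; simp

theorem star_pow_sub_of_norm_eq_one {lam : ℂ} (hlam : ‖lam‖ = 1) {j m : ℕ} (hj : j ≤ m) :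
    star lam ^ (m - j) = star lam ^ m * lam ^ j := by
  have hlam0 : lam ≠ 0 := norm_ne_zero_iff.1 (by rw [hlam]; exact one_ne_zero)
  rw [Complex.star_def, ← Complex.inv_eq_conj hlam, pow_sub₀ _ (inv_ne_zero hlam0) hj]
  simp only [inv_pow, inv_inv]

theorem conjTranspose_evalP {m : ℕ} {A : ℕ → Matrix (Fin n) (Fin n) ℂ}
    (hpal : ∀ j ≤ m, A (m - j) = (A j)ᴴ) {lam : ℂ} (hlam : ‖lam‖ = 1) :
    (evalP m A lam)ᴴ = star lam ^ m • evalP m A lam := by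
  have hrange : ∀ {j}, j ∈ range (m + 1) → j ≤ m := fun hj => Nat.lt_succ_iff.1 (mem_range.1 hj)
  calc (evalP m A lam)ᴴ = ∑ j ∈ range (m + 1), star lam ^ j • A (m - j) := by
        simp only [evalP, conjTranspose_sum, conjTranspose_smul, star_pow]
        exact sum_congr rfl fun j hj => by rw [hpal j (hrange hj)]
    _ = ∑ j ∈ range (m + 1), star lam ^ (m - j) • A j := by
        rw [← sum_range_reflect]
        refine sum_congr rfl fun j hj => ?_
        rw [Nat.add_sub_cancel, Nat.sub_sub_self (hrange hj)]
    _ = star lam ^ m • evalP m A lam := by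
        rw [evalP, smul_sum]
        exact sum_congr rfl fun j hj => by
          rw [star_pow_sub_of_norm_eq_one hlam (hrange hj), smul_smul]

theorem isHermitian_star_smul_evalP {m : ℕ} {A : ℕ → Matrix (Fin n) (Fin n) ℂ}
    (hpal : ∀ j ≤ m, A (m - j) = (A j)ᴴ) {lam μ : ℂ} (hlam : ‖lam‖ = 1) (hμ : μ ^ 2 = lam ^ m)
    (hμ1 : ‖μ‖ = 1) : (star μ • evalP m A lam).IsHermitian := by
  rw [IsHermitian, conjTranspose_smul, conjTranspose_evalP hpal hlam, smul_smul, star_star,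
    ← star_pow, ← hμ, star_pow, sq, ← mul_assoc, mul_star_of_norm_eq_one hμ1, one_mul]

-- Every `λ^j ΔA_j` equals `μ H / (m + 1)`: the residual is split evenly over the `m + 1`
-- coefficients, the equality case of Cauchy–Schwarz.
def palPerturbation (m : ℕ) (lam μ : ℂ) (H : Matrix (Fin n) (Fin n) ℂ) (j : ℕ) :
    Matrix (Fin n) (Fin n) ℂ :=
  (((m : ℂ) + 1)⁻¹ * star lam ^ j * μ) • H

section palPerturbation

variable {m : ℕ} {lam μ : ℂ} {H : Matrix (Fin n) (Fin n) ℂ}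

theorem palPerturbation_palindromic (hH : H.IsHermitian) (hlam : ‖lam‖ = 1)
    (hμ : μ ^ 2 = lam ^ m) (hμ1 : ‖μ‖ = 1) :
    ∀ j ≤ m, palPerturbation m lam μ H (m - j) = (palPerturbation m lam μ H j)ᴴ := by
  intro j hj
  rw [palPerturbation, palPerturbation, conjTranspose_smul, hH.eq]
  congr 1
  rw [star_pow_sub_of_norm_eq_one hlam hj, ← star_pow, ← hμ]
  simp only [star_mul', star_inv₀, star_add, star_one, star_natCast, star_pow, star_star]
  linear_combination (((m : ℂ) + 1)⁻¹ * lam ^ j * star μ) * mul_star_of_norm_eq_one hμ1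

theorem evalP_palPerturbation (hlam : ‖lam‖ = 1) :
    evalP m (palPerturbation m lam μ H) lam = μ • H := by
  have hunit : ∀ j : ℕ, lam ^ j * star lam ^ j = 1 := fun j => by
    rw [← mul_pow, mul_star_of_norm_eq_one hlam, one_pow]
  calc evalP m (palPerturbation m lam μ H) lam
      = ∑ j ∈ Finset.range (m + 1), (((m : ℂ) + 1)⁻¹ * μ) • H := by
        refine Finset.sum_congr rfl fun j _ => ?_
        rw [palPerturbation, smul_smul]
        congr 1
        linear_combination (((m : ℂ) + 1)⁻¹ * μ) * hunit j
    _ = μ • H := by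
        rw [Finset.sum_const, Finset.card_range, ← Nat.cast_smul_eq_nsmul ℂ, smul_smul]
        congr 1
        push_cast
        field_simp

theorem sqrt_sum_specNorm_palPerturbation (hlam : ‖lam‖ = 1) (hμ1 : ‖μ‖ = 1) :
    √(∑ j ∈ Finset.range (m + 1), specNorm (palPerturbation m lam μ H j) ^ 2) =
      specNorm H / √((m : ℝ) + 1) := by
  have hnorm : ∀ j, ‖((m : ℂ) + 1)⁻¹ * star lam ^ j * μ‖ = ((m : ℝ) + 1)⁻¹ := fun j => by
    rw [norm_mul, norm_mul, norm_inv, norm_pow, norm_star, hlam, hμ1]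
    norm_cast
    simp
  simp only [palPerturbation, specNorm_smul, hnorm, Finset.sum_const, Finset.card_range,
    nsmul_eq_mul]
  have hsum : ((m + 1 : ℕ) : ℝ) * (((m : ℝ) + 1)⁻¹ * specNorm H) ^ 2 =
      specNorm H ^ 2 / ((m : ℝ) + 1) := by
    push_cast; field_simp
  rw [hsum, Real.sqrt_div' _ (by positivity), Real.sqrt_sq (specNorm_nonneg H)]

end palPerturbation

end MatrixPolynomial

theorem stmt_12_general {m n : ℕ}
    (A : ℕ → Matrix (Fin n) (Fin n) ℂ)
    (hpal : ∀ j ≤ m, A (m - j) = (A j).conjTranspose)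
    (lam : ℂ) (hlam : ‖lam‖ = 1)
    (x : Fin n → ℂ) (hx : vnorm x = 1)
    (r : Fin n → ℂ) (hr : r = -(evalP m A lam).mulVec x) :
    eta2_Hpal m A lam x = vnorm r / Real.sqrt ((m : ℝ) + 1) ∧
      eta2_Hpal m A lam x = vnorm r / Real.sqrt (LamNormSq m lam) ∧
      LamNormSq m lam = (m : ℝ) + 1 := by
  have hLam := LamNormSq_eq_of_norm_eq_one hlam m
  obtain ⟨μ, hμ⟩ := IsAlgClosed.exists_pow_nat_eq (lam ^ m) two_pos
  have hμ1 : ‖μ‖ = 1 := (pow_eq_one_iff_of_nonneg (norm_nonneg μ) two_ne_zero).1 <| by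
    rw [← norm_pow, hμ, norm_pow, hlam, one_pow]
  obtain ⟨H, hH, hHx, hHnorm⟩ :=
    (isHermitian_star_smul_evalP hpal hlam hμ hμ1).neg.exists_isHermitian_mulVec_eq hx
  have hr' : vnorm r = vnorm ((-(star μ • evalP m A lam)) *ᵥ x) := by
    rw [hr, neg_mulVec, smul_mulVec, vnorm_neg, vnorm_neg, vnorm_smul, norm_star, hμ1, one_mul]
  have heta : eta2_Hpal m A lam x = vnorm r / √((m : ℝ) + 1) := by
    refine IsLeast.csInf_eq ⟨⟨palPerturbation m lam μ H,
      palPerturbation_palindromic hH hlam hμ hμ1, ?_, ?_⟩, ?_⟩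
    · rw [evalP_palPerturbation hlam, smul_mulVec, hHx, neg_mulVec, smul_mulVec, smul_neg,
        smul_smul, mul_star_of_norm_eq_one hμ1, one_smul, add_neg_cancel]
    · rw [sqrt_sum_specNorm_palPerturbation hlam hμ1, hHnorm, hr']
    · rintro e ⟨Δ, -, hΔ, rfl⟩
      have hΔx : evalP m Δ lam *ᵥ x = r := by rw [hr]; exact eq_neg_of_add_eq_zero_right hΔ
      rw [div_le_iff₀ (by positivity), ← hΔx, ← hLam, mul_comm]
      simpa [hx] using vnorm_evalP_mulVec_le m Δ lam x
  exact ⟨heta, hLam ▸ heta, hLam⟩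

/-- spectral structured backward error, H-palindromic, |λ| = 1; it equals
the unstructured backward error `‖r‖₂/‖Λ_m‖₂` (and `‖Λ_m‖₂² = m + 1` when |λ| = 1). -/
theorem stmt_12 {m n : ℕ} (hm : 0 < m) (hn : 0 < n)
    (A : ℕ → Matrix (Fin n) (Fin n) ℂ)
    (hpal : ∀ j ≤ m, A (m - j) = (A j).conjTranspose)
    (hreg : ∃ z : ℂ, (evalP m A z).det ≠ 0)
    (lam : ℂ) (hlam : ‖lam‖ = 1)
    (x : Fin n → ℂ) (hx : vnorm x = 1)
    (r : Fin n → ℂ) (hr : r = -(evalP m A lam).mulVec x) :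
    eta2_Hpal m A lam x = vnorm r / Real.sqrt ((m : ℝ) + 1) ∧
      eta2_Hpal m A lam x = vnorm r / Real.sqrt (LamNormSq m lam) ∧
      LamNormSq m lam = (m : ℝ) + 1 :=
  stmt_12_general A hpal lam hlam x hx r hr
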